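/- For every k with 1 ≤ k ≤ n+1, the complex vector space of all functions f : B∂(n+1,k) → ℂ satisfying f(g_a(X)) = f(X) for all a ∈ F^n and all X ∈ B∂(n+1,k) has dimension equal to the number of (k−1)-dimensional F-subspaces of F^n. (The multiplicity of the trivial character of F^n in the permutation representation on ℂ[B∂(n+1,k)] is the q-binomial coefficient [n choose k−1]_q.) -/
import Mathlib
open Module

noncomputable def H0 (F : Type) [Field F] (n : ℕ) : Submodule F (Fin (n + 1) → F) :=
  LinearMap.ker (LinearMap.proj (R := F) (φ := fun _ : Fin (n + 1) => F) (Fin.last n))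

def gmap (F : Type) [Field F] (n : ℕ) (a : Fin n → F) :
    (Fin (n + 1) → F) →ₗ[F] (Fin (n + 1) → F) where
  toFun v := v + v (Fin.last n) • (Fin.snoc a 0 : Fin (n + 1) → F)
  map_add' u v := by
    funext i
    simp only [Pi.add_apply, Pi.smul_apply, smul_eq_mul]
    ring
  map_smul' c v := by
    funext i
    simp only [Pi.add_apply, Pi.smul_apply, smul_eq_mul, RingHom.id_apply]
    ring

section Aux
variable (F : Type) [Field F] (n : ℕ)

def embed : (Fin n → F) →ₗ[F] (Fin (n + 1) → F) where
  toFun v := Fin.snoc v 0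
  map_add' u v := by
    funext i
    induction i using Fin.lastCases <;> simp
  map_smul' c v := by
    funext i
    induction i using Fin.lastCases <;> simp

variable {F n}

lemma embed_apply (v : Fin n → F) : embed F n v = Fin.snoc v 0 := rfl

lemma embed_inj : Function.Injective (embed F n) := by
  intro u v h
  funext i
  have := congrFun h i.castSucc
  simpa [embed_apply] using this

lemma mem_H0 {v : Fin (n + 1) → F} : v ∈ H0 F n ↔ v (Fin.last n) = 0 := Iff.rfl

lemma range_embed : LinearMap.range (embed F n) = H0 F n := by
  ext u
  simp only [LinearMap.mem_range, mem_H0]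
  constructor
  · rintro ⟨v, rfl⟩; simp [embed_apply]
  · intro h
    refine ⟨fun i => u i.castSucc, ?_⟩
    funext i
    induction i using Fin.lastCases <;> simp [embed_apply, h]

lemma gmap_apply (a : Fin n → F) (v : Fin (n+1) → F) :
    gmap F n a v = v + v (Fin.last n) • (Fin.snoc a 0 : Fin (n + 1) → F) := rfl

lemma gmap_fix {a : Fin n → F} {v : Fin (n+1) → F} (hv : v (Fin.last n) = 0) :
    gmap F n a v = v := by
  simp [gmap_apply, hv]

lemma gmap_neg_gmap (a : Fin n → F) (v : Fin (n+1) → F) :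
    gmap F n (-a) (gmap F n a v) = v := by
  have hlast : (gmap F n a v) (Fin.last n) = v (Fin.last n) := by
    simp [gmap_apply]
  funext i
  rw [gmap_apply, gmap_apply]
  have hsn : (Fin.snoc (-a) 0 : Fin (n+1) → F) i = - (Fin.snoc a 0 : Fin (n+1) → F) i := by
    induction i using Fin.lastCases <;> simp
  simp only [Pi.add_apply, Pi.smul_apply, smul_eq_mul, hlast, hsn, Fin.snoc_last]
  ring

lemma comap_gmap (a : Fin n → F) (X : Submodule F (Fin (n+1) → F)) :
    Submodule.comap (embed F n) (Submodule.map (gmap F n a) X)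
      = Submodule.comap (embed F n) X := by
  ext v
  simp only [Submodule.mem_comap, Submodule.mem_map]
  constructor
  · rintro ⟨x, hx, hgx⟩
    have hx' : x = embed F n v := by
      have := congrArg (gmap F n (-a)) hgx
      rw [gmap_neg_gmap] at this
      rw [this, gmap_fix]
      simp [embed_apply]
    rwa [hx'] at hx
  · intro h
    exact ⟨embed F n v, h, gmap_fix (by simp [embed_apply])⟩

lemma inf_H0 (X : Submodule F (Fin (n+1) → F)) :
    X ⊓ H0 F n = Submodule.map (embed F n) (Submodule.comap (embed F n) X) := by
  rw [Submodule.map_comap_eq, range_embed, inf_comm]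

lemma map_fix {p : Submodule F (Fin (n+1) → F)} {a : Fin n → F}
    (h : ∀ x ∈ p, x (Fin.last n) = 0) :
    Submodule.map (gmap F n a) p = p := by
  ext x
  simp only [Submodule.mem_map]
  constructor
  · rintro ⟨y, hy, rfl⟩
    rwa [gmap_fix (h y hy)]
  · intro hx
    exact ⟨x, hx, gmap_fix (h x hx)⟩

lemma exists_vec {X : Submodule F (Fin (n+1) → F)} (hX : ¬ X ≤ H0 F n) :
    ∃ v ∈ X, v (Fin.last n) = 1 := by
  rw [SetLike.not_le_iff_exists] at hX
  obtain ⟨x, hx, hx0⟩ := hX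
  rw [mem_H0] at hx0
  refine ⟨(x (Fin.last n))⁻¹ • x, X.smul_mem _ hx, ?_⟩
  simp [inv_mul_cancel₀ hx0]

lemma span_decomp {X : Submodule F (Fin (n+1) → F)} {v : Fin (n+1) → F}
    (hv : v ∈ X) (hv1 : v (Fin.last n) = 1) :
    (X ⊓ H0 F n) ⊔ Submodule.span F {v} = X := by
  apply le_antisymm
  · exact sup_le inf_le_left ((Submodule.span_singleton_le_iff_mem v X).mpr hv)
  · intro x hx
    have h1 : x - x (Fin.last n) • v ∈ X ⊓ H0 F n := by
      refine ⟨X.sub_mem hx (X.smul_mem _ hv), ?_⟩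
      simp [mem_H0, hv1]
    have h2 : x (Fin.last n) • v ∈ Submodule.span F {v} :=
      Submodule.smul_mem _ _ (Submodule.mem_span_singleton_self v)
    have := Submodule.add_mem_sup h1 h2
    simpa using this

lemma finrank_H0 : finrank F (H0 F n) = n := by
  rw [← range_embed, LinearMap.finrank_range_of_inj embed_inj, Module.finrank_fin_fun]

lemma sup_H0_eq_top {X : Submodule F (Fin (n+1) → F)} (hX : ¬ X ≤ H0 F n) :
    X ⊔ H0 F n = ⊤ := by
  apply Submodule.eq_top_of_finrank_eq
  have h1 : H0 F n < X ⊔ H0 F n := by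
    refine lt_of_le_of_ne le_sup_right (fun h => hX (le_sup_left.trans h.ge))
  have h2 : n < finrank F ↥(X ⊔ H0 F n) := by
    have := Submodule.finrank_lt_finrank_of_lt h1
    rwa [finrank_H0] at this
  have h3 : finrank F ↥(X ⊔ H0 F n) ≤ n + 1 := by
    have := Submodule.finrank_le (X ⊔ H0 F n)
    rwa [Module.finrank_fin_fun] at this
  rw [Module.finrank_fin_fun]
  omega

lemma finrank_comap {k : ℕ} {X : Submodule F (Fin (n+1) → F)} (hX : ¬ X ≤ H0 F n)
    (hd : finrank F X = k) : finrank F (Submodule.comap (embed F n) X) = k - 1 := by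
  have key : finrank F ↥(X ⊔ H0 F n) + finrank F ↥(X ⊓ H0 F n)
      = finrank F X + finrank F (H0 F n) :=
    Submodule.finrank_sup_add_finrank_inf_eq X (H0 F n)
  rw [sup_H0_eq_top hX, finrank_top, Module.finrank_fin_fun, hd, finrank_H0] at key
  have hco : finrank F ↥(Submodule.map (embed F n) (Submodule.comap (embed F n) X))
      = finrank F ↥(Submodule.comap (embed F n) X) :=
    (LinearEquiv.finrank_eq (Submodule.equivMapOfInjective _ embed_inj _)).symm
  rw [inf_H0, hco] at key
  have hk : 1 ≤ k := by
    by_contra h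
    push_neg at h
    interval_cases k
    exact hX ((Submodule.finrank_eq_zero.mp hd) ▸ bot_le)
  omega

lemma exists_gmap {X Y : Submodule F (Fin (n+1) → F)}
    (hX : ¬ X ≤ H0 F n) (hY : ¬ Y ≤ H0 F n)
    (h : Submodule.comap (embed F n) X = Submodule.comap (embed F n) Y) :
    ∃ a : Fin n → F, Submodule.map (gmap F n a) X = Y := by
  obtain ⟨v, hv, hv1⟩ := exists_vec hX
  obtain ⟨w, hw, hw1⟩ := exists_vec hY
  refine ⟨fun i => (w - v) i.castSucc, ?_⟩
  have hsnoc : (Fin.snoc (fun i => (w - v) i.castSucc) 0 : Fin (n+1) → F) = w - v := by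
    funext i
    induction i using Fin.lastCases with
    | last => simp [hv1, hw1]
    | cast j => simp
  have hgv : gmap F n (fun i => (w - v) i.castSucc) v = w := by
    rw [gmap_apply, hv1, hsnoc, one_smul]
    abel
  have hXY : X ⊓ H0 F n = Y ⊓ H0 F n := by rw [inf_H0, inf_H0, h]
  rw [← span_decomp hv hv1, Submodule.map_sup, Submodule.map_span, map_fix, hXY,
    Set.image_singleton, hgv]
  · exact span_decomp hw hw1
  · intro x hx
    exact (mem_H0).mp hx.2

lemma sect {k : ℕ} (hk : 1 ≤ k) (W : Submodule F (Fin n → F)) (hW : finrank F W = k - 1) :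
    ∃ X : Submodule F (Fin (n+1) → F),
      (¬ X ≤ H0 F n ∧ finrank F X = k) ∧ Submodule.comap (embed F n) X = W := by
  set e : Fin (n+1) → F := Fin.snoc 0 1 with he
  have he1 : e (Fin.last n) = 1 := by simp [he]
  have hene : e ≠ 0 := by
    intro h
    have := congrFun h (Fin.last n)
    rw [he1] at this
    exact one_ne_zero this
  set X : Submodule F (Fin (n+1) → F) :=
    Submodule.map (embed F n) W ⊔ Submodule.span F {e} with hXdef
  have heX : e ∈ X := Submodule.mem_sup_right (Submodule.mem_span_singleton_self e)
  have hnot : ¬ X ≤ H0 F n := by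
    intro h
    have := (mem_H0).mp (h heX)
    rw [he1] at this
    exact one_ne_zero this
  have hmemX : ∀ u, u ∈ X ↔ ∃ w ∈ W, ∃ c : F, embed F n w + c • e = u := by
    intro u
    rw [hXdef, Submodule.mem_sup]
    constructor
    · rintro ⟨y, hy, z, hz, rfl⟩
      obtain ⟨w, hw, rfl⟩ := hy
      obtain ⟨c, rfl⟩ := Submodule.mem_span_singleton.mp hz
      exact ⟨w, hw, c, rfl⟩
    · rintro ⟨w, hw, c, rfl⟩
      exact ⟨embed F n w, ⟨w, hw, rfl⟩, c • e, Submodule.smul_mem _ _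
        (Submodule.mem_span_singleton_self e), rfl⟩
  have hcomap : Submodule.comap (embed F n) X = W := by
    ext v
    rw [Submodule.mem_comap, hmemX]
    constructor
    · rintro ⟨w, hw, c, hc⟩
      have hlast := congrFun hc (Fin.last n)
      simp only [Pi.add_apply, Pi.smul_apply, smul_eq_mul, he1, mul_one, embed_apply,
        Fin.snoc_last] at hlast
      rw [zero_add] at hlast
      subst hlast
      have : embed F n w = embed F n v := by simpa using hc
      rwa [← embed_inj this]
    · intro hv
      exact ⟨v, hv, 0, by simp⟩
  have hinf : Submodule.map (embed F n) W ⊓ Submodule.span F {e} = ⊥ := by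
    rw [Submodule.eq_bot_iff]
    rintro x ⟨⟨w, _, rfl⟩, hx2⟩
    obtain ⟨c, hc⟩ := Submodule.mem_span_singleton.mp hx2
    have hlast := congrFun hc (Fin.last n)
    simp only [Pi.smul_apply, smul_eq_mul, he1, mul_one, embed_apply, Fin.snoc_last] at hlast
    rw [← hc, hlast, zero_smul]
  have hrank : finrank F X = k := by
    have key := Submodule.finrank_sup_add_finrank_inf_eq
      (Submodule.map (embed F n) W) (Submodule.span F {e})
    rw [hinf, ← hXdef, finrank_bot, finrank_span_singleton hene] at key
    have hmap : finrank F ↥(Submodule.map (embed F n) W) = k - 1 := by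
      rw [← LinearEquiv.finrank_eq (Submodule.equivMapOfInjective _ embed_inj W)]
      exact hW
    rw [hmap] at key
    omega
  exact ⟨X, ⟨hnot, hrank⟩, hcomap⟩

end Aux

/-- The space of functions on `B∂(n+1,k)` invariant under the action of `F^n`. -/
noncomputable def Wtriv (F : Type) [Field F] (n k : ℕ) :
    Submodule ℂ
      ({X : Submodule F (Fin (n + 1) → F) // ¬ X ≤ H0 F n ∧ finrank F X = k} → ℂ) where
  carrier := {f | ∀ (a : Fin n → F)
    (X Y : {X : Submodule F (Fin (n + 1) → F) // ¬ X ≤ H0 F n ∧ finrank F X = k}),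
    Submodule.map (gmap F n a) X.1 = Y.1 → f Y = f X}
  add_mem' := by
    intro f g hf hg a X Y h
    simp only [Pi.add_apply, hf a X Y h, hg a X Y h]
  zero_mem' := by intro a X Y h; simp
  smul_mem' := by
    intro c f hf a X Y h
    simp only [Pi.smul_apply, hf a X Y h]

theorem stmt_13 (q n k : ℕ) (F : Type) [Field F] [Fintype F] (hq : Fintype.card F = q)
    (hk1 : 1 ≤ k) (hk2 : k ≤ n + 1) :
    finrank ℂ (Wtriv F n k) =
      Nat.card {X : Submodule F (Fin n → F) // finrank F X = k - 1} := by
  classical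
  set B := {X : Submodule F (Fin (n + 1) → F) // ¬ X ≤ H0 F n ∧ finrank F X = k} with hB
  set T := {X : Submodule F (Fin n → F) // finrank F X = k - 1} with hT
  -- the projection map
  set π : B → T := fun X => ⟨Submodule.comap (embed F n) X.1, finrank_comap X.2.1 X.2.2⟩
    with hπ
  -- a section of π
  have hsec : ∀ t : T, ∃ X : B, π X = t := by
    intro t
    obtain ⟨X, hX, hXc⟩ := sect hk1 t.1 t.2
    exact ⟨⟨X, hX⟩, Subtype.ext hXc⟩
  choose σ hσ using hsec
  -- membership criterion
  have hmem : ∀ f : B → ℂ, f ∈ Wtriv F n k ↔ ∀ X Y : B, π X = π Y → f Y = f X := by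
    intro f
    constructor
    · intro hf X Y hXY
      obtain ⟨a, ha⟩ := exists_gmap X.2.1 Y.2.1 (congrArg Subtype.val hXY)
      exact hf a X Y ha
    · intro h a X Y hmap
      refine h X Y (Subtype.ext ?_)
      rw [hπ]
      dsimp only
      rw [← hmap, comap_gmap]
  -- the linear map to functions on T
  set Φ : Wtriv F n k →ₗ[ℂ] (T → ℂ) :=
    { toFun := fun f t => f.1 (σ t)
      map_add' := fun f g => rfl
      map_smul' := fun c f => rfl } with hΦ
  have hinj : Function.Injective Φ := by
    intro f g hfg
    apply Subtype.ext
    funext X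
    have h1 : f.1 X = f.1 (σ (π X)) := (hmem f.1).mp f.2 (σ (π X)) X (hσ (π X))
    have h2 : g.1 X = g.1 (σ (π X)) := (hmem g.1).mp g.2 (σ (π X)) X (hσ (π X))
    rw [h1, h2]
    exact congrFun hfg (π X)
  have hsurj : Function.Surjective Φ := by
    intro g
    refine ⟨⟨fun X => g (π X), (hmem _).mpr fun X Y h => by rw [h]⟩, ?_⟩
    funext t
    show g (π (σ t)) = g t
    rw [hσ t]
  rw [LinearEquiv.finrank_eq (LinearEquiv.ofBijective Φ ⟨hinj, hsurj⟩)]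
  have : Finite (Submodule F (Fin n → F)) :=
    Finite.of_injective _ (SetLike.coe_injective (A := Submodule F (Fin n → F)))
  have : Finite T := Subtype.finite
  have : Fintype T := Fintype.ofFinite T
  rw [Module.finrank_fintype_fun_eq_card, Nat.card_eq_fintype_card]
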